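/- Let H, K be complex Hilbert spaces with dim K < ∞, and for closed densely-defined operators T, S from H to K define T̂ = (I + T*T)^{−1/2}T*. Then the map T ↦ T̂ into the open unit ball 𝓑 of B(K,H) is injective, and d(T, S) := K_𝓑(T̂, Ŝ) defines a metric on C(H,K), where K_𝓑 is the Kobayashi metric of 𝓑. -/

import Mathlib

open Metric

/-- Inverse hyperbolic tangent, `tanh⁻¹ t`. -/
noncomputable def artanh (t : ℝ) : ℝ := Real.log ((1 + t) / (1 - t)) / 2

/-- The Poincaré distance on the open unit disc in `ℂ`. -/
noncomputable def poincare (a b : ℂ) : ℝ :=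
  artanh (‖a - b‖ / ‖1 - (starRingEnd ℂ) a * b‖)

/-- An analytic chain joining `x` and `y` in the open unit ball of a complex normed space `X`:
points `z i`, `w i` of the unit disc and holomorphic maps `f i` from the unit disc into the
unit ball with `f 0 (z 0) = x`, `f i (w i) = f (i+1) (z (i+1))`, `f (n-1) (w (n-1)) = y`. -/
structure AnalyticChain (X : Type*) [NormedAddCommGroup X] [NormedSpace ℂ X]
    (x y : X) : Type _ where
  n : ℕ
  npos : 0 < n
  z : ℕ → ℂ
  w : ℕ → ℂ
  hz : ∀ i < n, ‖z i‖ < 1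
  hw : ∀ i < n, ‖w i‖ < 1
  f : ℕ → ℂ → X
  holo : ∀ i < n, DifferentiableOn ℂ (f i) (ball (0 : ℂ) 1)
  maps : ∀ i < n, ∀ ζ ∈ ball (0 : ℂ) 1, f i ζ ∈ ball (0 : X) 1
  first : f 0 (z 0) = x
  last : f (n - 1) (w (n - 1)) = y
  link : ∀ i, i + 1 < n → f i (w i) = f (i + 1) (z (i + 1))

/-- The total Poincaré length of an analytic chain. -/
noncomputable def AnalyticChain.length {X : Type*} [NormedAddCommGroup X] [NormedSpace ℂ X]
    {x y : X} (c : AnalyticChain X x y) : ℝ :=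
  ∑ i ∈ Finset.range c.n, poincare (c.z i) (c.w i)

/-- The Kobayashi pseudo-metric on the open unit ball of `X`: the infimum of the lengths of
analytic chains joining `x` and `y`. -/
noncomputable def kobayashi (X : Type*) [NormedAddCommGroup X] [NormedSpace ℂ X]
    (x y : X) : ℝ :=
  sInf {r : ℝ | ∃ c : AnalyticChain X x y, c.length = r}


/-- A closed densely-defined operator from `H` to `K`: an element of `C(H,K)`. -/
structure ClosedDenseOp (H K : Type*) [NormedAddCommGroup H] [InnerProductSpace ℂ H]
    [NormedAddCommGroup K] [InnerProductSpace ℂ K] : Type _ where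
  op : H →ₗ.[ℂ] K
  dense : Dense (op.domain : Set H)
  closed : op.IsClosed

/-!
Each link `f` of an analytic chain is a holomorphic map from the disc into the unit ball;
precomposed with the disc automorphism `mobius (-a)` it sends `0` to `f a`, so the Schwarz lemma
gives `‖f b - f a‖ ≤ 2 ‖mobius a b‖ ≤ 4 poincare a b`. Summing along a chain, the Kobayashi
distance of the ball dominates `‖y - x‖ / 4`, hence it is a metric there.

For the operators, `S = (I + T*T)^{-1/2}` and `A = T̂` satisfy `A A* + S² = 1`, which is checked
on `S (S u)`, and these points fill the dense domain `D(T) = ran S²`. So `S` is the positive square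
root of `1 - A A*`, and `T` is recovered from `A` through `T S² = A* S`: the transform is injective.
As `S` is injective, `A*` and then `A` are pointwise strict contractions, and `‖A‖ < 1` because the
unit sphere of `K` is compact.
-/

open Set ComplexConjugate

lemma half_le_artanh {t : ℝ} (h0 : 0 ≤ t) (h1 : t < 1) : t / 2 ≤ artanh t := by
  have hlog := Real.one_sub_inv_le_log_of_pos (div_pos (by linarith) (by linarith) :
    0 < (1 + t) / (1 - t))
  have hle : t ≤ 1 - ((1 + t) / (1 - t))⁻¹ := by
    rw [inv_div, le_sub_comm, div_le_iff₀ (by linarith)]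
    nlinarith
  unfold artanh
  linarith

noncomputable def mobius (a z : ℂ) : ℂ := (z - a) / (1 - conj a * z)

section Mobius

variable {a z : ℂ}

lemma normSq_one_sub_conj_mul_sub_normSq_sub (a z : ℂ) :
    Complex.normSq (1 - conj a * z) - Complex.normSq (z - a) =
      (1 - Complex.normSq a) * (1 - Complex.normSq z) := by
  apply Complex.ofReal_injective
  push_cast [← Complex.mul_conj]
  simp only [map_sub, map_mul, map_one, Complex.conj_conj]
  ring

lemma norm_sub_lt_norm_one_sub_conj_mul (ha : ‖a‖ < 1) (hz : ‖z‖ < 1) :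
    ‖z - a‖ < ‖1 - conj a * z‖ := by
  have key := normSq_one_sub_conj_mul_sub_normSq_sub a z
  simp only [Complex.normSq_eq_norm_sq] at key
  have hpos : 0 < (1 - ‖a‖ ^ 2) * (1 - ‖z‖ ^ 2) := by
    apply mul_pos <;> nlinarith [norm_nonneg a, norm_nonneg z]
  exact lt_of_pow_lt_pow_left₀ 2 (norm_nonneg _) (by linarith)

lemma one_sub_conj_mul_ne_zero (ha : ‖a‖ < 1) (hz : ‖z‖ < 1) : 1 - conj a * z ≠ 0 :=
  norm_pos_iff.1 ((norm_nonneg _).trans_lt (norm_sub_lt_norm_one_sub_conj_mul ha hz))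

lemma norm_mobius_lt_one (ha : ‖a‖ < 1) (hz : ‖z‖ < 1) : ‖mobius a z‖ < 1 := by
  rw [mobius, norm_div, div_lt_one (norm_pos_iff.2 (one_sub_conj_mul_ne_zero ha hz))]
  exact norm_sub_lt_norm_one_sub_conj_mul ha hz

lemma mobius_neg_zero (a : ℂ) : mobius (-a) 0 = a := by simp [mobius]

lemma mobius_neg_mobius (ha : ‖a‖ < 1) (hz : ‖z‖ < 1) : mobius (-a) (mobius a z) = z := by
  have hz' := one_sub_conj_mul_ne_zero ha hz
  have ha' := one_sub_conj_mul_ne_zero ha ha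
  have hden : 1 - conj a * z + conj a * (z - a) = 1 - conj a * a := by ring
  simp only [mobius, map_neg, sub_neg_eq_add, neg_mul]
  rw [div_add' _ _ _ hz', mul_div_assoc', one_add_div hz', div_div_div_cancel_right₀ hz', hden,
    div_eq_iff ha']
  ring

lemma differentiableOn_mobius (ha : ‖a‖ < 1) :
    DifferentiableOn ℂ (mobius a) (ball 0 1) :=
  DifferentiableOn.div (by fun_prop) (by fun_prop) fun _ hz =>
    one_sub_conj_mul_ne_zero ha (mem_ball_zero_iff.1 hz)

lemma mapsTo_mobius (ha : ‖a‖ < 1) : MapsTo (mobius a) (ball 0 1) (ball 0 1) := fun z hz => by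
  rw [mem_ball_zero_iff] at hz ⊢
  exact norm_mobius_lt_one ha hz

end Mobius

section Disc

variable {E : Type*} [NormedAddCommGroup E] [NormedSpace ℂ E] {a b : ℂ}

lemma norm_sub_le_two_mul_norm_mobius {f : ℂ → E} (hd : DifferentiableOn ℂ f (ball 0 1))
    (hf : MapsTo f (ball 0 1) (ball 0 1)) (ha : ‖a‖ < 1) (hb : ‖b‖ < 1) :
    ‖f b - f a‖ ≤ 2 * ‖mobius a b‖ := by
  have ha' : ‖-a‖ < 1 := by rwa [norm_neg]
  have hfa : ‖f a‖ < 1 := mem_ball_zero_iff.1 (hf (mem_ball_zero_iff.2 ha))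
  have hmaps : MapsTo (f ∘ mobius (-a)) (ball 0 1) (closedBall ((f ∘ mobius (-a)) 0) 2) := by
    intro ζ hζ
    have hfζ := mem_ball_zero_iff.1 (hf (mapsTo_mobius ha' hζ))
    rw [Function.comp_apply, Function.comp_apply, mobius_neg_zero, mem_closedBall, dist_eq_norm]
    linarith [norm_sub_le (f (mobius (-a) ζ)) (f a)]
  have := Complex.dist_le_div_mul_dist_of_mapsTo_ball
    (hd.comp (differentiableOn_mobius ha') (mapsTo_mobius ha')) hmaps
    (mem_ball_zero_iff.2 (norm_mobius_lt_one ha hb))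
  simpa [mobius_neg_mobius ha hb, mobius_neg_zero, dist_eq_norm] using this

lemma poincare_eq_artanh_norm_mobius (a b : ℂ) : poincare a b = artanh ‖mobius a b‖ := by
  rw [poincare, mobius, norm_div, norm_sub_rev]

lemma poincare_nonneg (ha : ‖a‖ < 1) (hb : ‖b‖ < 1) : 0 ≤ poincare a b := by
  rw [poincare_eq_artanh_norm_mobius]
  linarith [half_le_artanh (norm_nonneg _) (norm_mobius_lt_one ha hb), norm_nonneg (mobius a b)]

lemma poincare_self (a : ℂ) : poincare a a = 0 := by simp [poincare, artanh]

lemma poincare_comm (a b : ℂ) : poincare a b = poincare b a := by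
  rw [poincare, poincare, norm_sub_rev, ← Complex.norm_conj (1 - conj a * b)]
  simp [mul_comm]

lemma norm_sub_le_four_mul_poincare {f : ℂ → E} (hd : DifferentiableOn ℂ f (ball 0 1))
    (hf : MapsTo f (ball 0 1) (ball 0 1)) (ha : ‖a‖ < 1) (hb : ‖b‖ < 1) :
    ‖f b - f a‖ ≤ 4 * poincare a b := by
  rw [poincare_eq_artanh_norm_mobius]
  linarith [half_le_artanh (norm_nonneg _) (norm_mobius_lt_one ha hb),
    norm_sub_le_two_mul_norm_mobius hd hf ha hb]

end Disc

lemma forall_lt_add_ite {α : Type*} {P : α → Prop} {m n : ℕ} {g₁ g₂ : ℕ → α}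
    (h₁ : ∀ i < m, P (g₁ i)) (h₂ : ∀ i < n, P (g₂ i)) :
    ∀ i < m + n, P (if i < m then g₁ i else g₂ (i - m)) := by
  intro i hi
  split_ifs with h
  · exact h₁ i h
  · exact h₂ (i - m) (by omega)

namespace AnalyticChain

variable {X : Type*} [NormedAddCommGroup X] [NormedSpace ℂ X] {p q r : X}

lemma length_nonneg (c : AnalyticChain X p q) : 0 ≤ c.length :=
  Finset.sum_nonneg fun i hi =>
    poincare_nonneg (c.hz i (Finset.mem_range.1 hi)) (c.hw i (Finset.mem_range.1 hi))

def const (hp : ‖p‖ < 1) : AnalyticChain X p p where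
  n := 1
  npos := one_pos
  z _ := 0
  w _ := 0
  hz _ _ := by simp
  hw _ _ := by simp
  f _ _ := p
  holo _ _ := differentiableOn_const p
  maps _ _ _ _ := mem_ball_zero_iff.2 hp
  first := rfl
  last := rfl
  link _ _ := rfl

lemma length_const (hp : ‖p‖ < 1) : (const hp).length = 0 := by
  simp [length, const, poincare_self]

noncomputable def toZero (hp : ‖p‖ < 1) : AnalyticChain X p 0 where
  n := 1
  npos := one_pos
  z _ := ((1 + ‖p‖) / 2 : ℝ)
  w _ := 0
  hz _ _ := by
    rw [Complex.norm_real, Real.norm_of_nonneg (by positivity)]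
    linarith
  hw _ _ := by simp
  f _ ζ := (ζ / ((1 + ‖p‖) / 2 : ℝ)) • p
  holo _ _ := by fun_prop
  maps _ _ ζ hζ := by
    rw [mem_ball_zero_iff] at hζ ⊢
    rw [norm_smul, norm_div, Complex.norm_real, Real.norm_of_nonneg (by positivity),
      div_mul_eq_mul_div, div_lt_one (by positivity)]
    nlinarith [norm_nonneg p, norm_nonneg ζ]
  first := by
    rw [div_self (Complex.ofReal_ne_zero.2 (by positivity)), one_smul]
  last := by simp
  link _ h := absurd h (by omega)

def reverse (c : AnalyticChain X p q) : AnalyticChain X q p where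
  n := c.n
  npos := c.npos
  z i := c.w (c.n - 1 - i)
  w i := c.z (c.n - 1 - i)
  hz _ _ := c.hw _ (by omega)
  hw _ _ := c.hz _ (by omega)
  f i := c.f (c.n - 1 - i)
  holo _ _ := c.holo _ (by omega)
  maps _ _ := c.maps _ (by omega)
  first := by simpa using c.last
  last := by simpa using c.first
  link i hi := by
    have h := c.link (c.n - 1 - (i + 1)) (by omega)
    rw [show c.n - 1 - (i + 1) + 1 = c.n - 1 - i by omega] at h
    exact h.symm

lemma length_reverse (c : AnalyticChain X p q) : c.reverse.length = c.length := by
  simp only [length, reverse]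
  rw [Finset.sum_range_reflect (fun i => poincare (c.w i) (c.z i))]
  exact Finset.sum_congr rfl fun i _ => poincare_comm _ _

def append (c₁ : AnalyticChain X p q) (c₂ : AnalyticChain X q r) : AnalyticChain X p r where
  n := c₁.n + c₂.n
  npos := Nat.add_pos_left c₁.npos _
  z i := if i < c₁.n then c₁.z i else c₂.z (i - c₁.n)
  w i := if i < c₁.n then c₁.w i else c₂.w (i - c₁.n)
  hz := forall_lt_add_ite (P := fun ζ : ℂ => ‖ζ‖ < 1) c₁.hz c₂.hz
  hw := forall_lt_add_ite (P := fun ζ : ℂ => ‖ζ‖ < 1) c₁.hw c₂.hw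
  f i := if i < c₁.n then c₁.f i else c₂.f (i - c₁.n)
  holo := forall_lt_add_ite (P := fun g => DifferentiableOn ℂ g (ball 0 1)) c₁.holo c₂.holo
  maps := forall_lt_add_ite (P := fun g : ℂ → X => ∀ ζ ∈ ball 0 1, g ζ ∈ ball 0 1) c₁.maps c₂.maps
  first := by simp [c₁.npos, c₁.first]
  last := by
    have := c₂.npos
    rw [if_neg (by omega), if_neg (by omega), show c₁.n + c₂.n - 1 - c₁.n = c₂.n - 1 by omega,
      c₂.last]
  link i hi := by
    obtain h | h | h := lt_trichotomy (i + 1) c₁.n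
    · simp only [h, show i < c₁.n by omega, ↓reduceIte]
      exact c₁.link i h
    · simp only [show i < c₁.n by omega, h, lt_irrefl, ↓reduceIte, Nat.sub_self]
      rw [c₂.first, show i = c₁.n - 1 by omega]
      exact c₁.last
    · simp only [show ¬i < c₁.n by omega, show ¬i + 1 < c₁.n by omega, ↓reduceIte,
        show i + 1 - c₁.n = i - c₁.n + 1 by omega]
      exact c₂.link _ (by omega)

lemma length_append (c₁ : AnalyticChain X p q) (c₂ : AnalyticChain X q r) :
    (c₁.append c₂).length = c₁.length + c₂.length := by
  simp only [length, append]
  rw [Finset.sum_range_add]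
  congr 1
  · exact Finset.sum_congr rfl fun i hi => by simp [Finset.mem_range.1 hi]
  · exact Finset.sum_congr rfl fun i _ => by simp

lemma norm_apply_sub_le (c : AnalyticChain X p q) {i : ℕ} (hi : i < c.n) :
    ‖c.f i (c.w i) - c.f i (c.z i)‖ ≤ 4 * poincare (c.z i) (c.w i) :=
  norm_sub_le_four_mul_poincare (c.holo i hi) (c.maps i hi) (c.hz i hi) (c.hw i hi)

lemma norm_sub_le_four_mul_length (c : AnalyticChain X p q) : ‖q - p‖ ≤ 4 * c.length := by
  have key : ∀ j < c.n,
      ‖c.f j (c.w j) - p‖ ≤ 4 * ∑ i ∈ Finset.range (j + 1), poincare (c.z i) (c.w i) := by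
    intro j hj
    induction j with
    | zero => simpa [← c.first] using c.norm_apply_sub_le hj
    | succ k ih =>
      have hstep := c.norm_apply_sub_le hj
      calc ‖c.f (k + 1) (c.w (k + 1)) - p‖
          = ‖(c.f (k + 1) (c.w (k + 1)) - c.f (k + 1) (c.z (k + 1))) + (c.f k (c.w k) - p)‖ := by
            rw [c.link k hj, sub_add_sub_cancel]
        _ ≤ _ := norm_add_le _ _
        _ ≤ _ := by rw [Finset.sum_range_succ _ (k + 1)]; linarith [ih (by omega)]
  have hlast := key (c.n - 1) (by have := c.npos; omega)
  rwa [c.last, Nat.sub_add_cancel c.npos] at hlast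

lemma nonempty (hp : ‖p‖ < 1) (hq : ‖q‖ < 1) : Nonempty (AnalyticChain X p q) :=
  ⟨(toZero hp).append (toZero hq).reverse⟩

end AnalyticChain

section Kobayashi

variable {X : Type*} [NormedAddCommGroup X] [NormedSpace ℂ X] {p q r : X}

lemma kobayashi_nonneg (p q : X) : 0 ≤ kobayashi X p q :=
  Real.sInf_nonneg fun _ ⟨c, hc⟩ => hc ▸ c.length_nonneg

lemma kobayashi_le_length (c : AnalyticChain X p q) : kobayashi X p q ≤ c.length :=
  csInf_le ⟨0, fun _ ⟨c, hc⟩ => hc ▸ c.length_nonneg⟩ ⟨c, rfl⟩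

lemma exists_length_lt_kobayashi_add (hp : ‖p‖ < 1) (hq : ‖q‖ < 1) {ε : ℝ} (hε : 0 < ε) :
    ∃ c : AnalyticChain X p q, c.length < kobayashi X p q + ε := by
  obtain ⟨c⟩ := AnalyticChain.nonempty hp hq
  obtain ⟨_, ⟨c, rfl⟩, hc⟩ :=
    Real.lt_sInf_add_pos (s := {r | ∃ c : AnalyticChain X p q, c.length = r}) ⟨_, c, rfl⟩ hε
  exact ⟨c, hc⟩

lemma kobayashi_self (hp : ‖p‖ < 1) : kobayashi X p p = 0 :=
  le_antisymm ((kobayashi_le_length _).trans_eq (AnalyticChain.length_const hp))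
    (kobayashi_nonneg p p)

lemma kobayashi_comm (p q : X) : kobayashi X p q = kobayashi X q p := by
  have h : ∀ p q : X, {r | ∃ c : AnalyticChain X p q, c.length = r} ⊆
      {r | ∃ c : AnalyticChain X q p, c.length = r} :=
    fun _ _ _ ⟨c, hc⟩ => ⟨c.reverse, c.length_reverse.trans hc⟩
  exact congrArg sInf ((h p q).antisymm (h q p))

lemma kobayashi_triangle (hp : ‖p‖ < 1) (hq : ‖q‖ < 1) (hr : ‖r‖ < 1) :
    kobayashi X p r ≤ kobayashi X p q + kobayashi X q r := by
  refine le_of_forall_pos_lt_add fun ε hε => ?_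
  obtain ⟨c₁, hc₁⟩ := exists_length_lt_kobayashi_add hp hq (half_pos hε)
  obtain ⟨c₂, hc₂⟩ := exists_length_lt_kobayashi_add hq hr (half_pos hε)
  have := (kobayashi_le_length (c₁.append c₂)).trans_eq (c₁.length_append c₂)
  linarith

lemma norm_sub_le_four_mul_kobayashi (hp : ‖p‖ < 1) (hq : ‖q‖ < 1) :
    ‖q - p‖ ≤ 4 * kobayashi X p q := by
  obtain ⟨c⟩ := AnalyticChain.nonempty hp hq
  have : ‖q - p‖ / 4 ≤ kobayashi X p q :=
    le_csInf ⟨_, c, rfl⟩ fun _ ⟨c, hc⟩ => hc ▸ by linarith [c.norm_sub_le_four_mul_length]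
  linarith

lemma kobayashi_eq_zero_iff (hp : ‖p‖ < 1) (hq : ‖q‖ < 1) : kobayashi X p q = 0 ↔ p = q := by
  refine ⟨fun h => ?_, fun h => h ▸ kobayashi_self hp⟩
  have := norm_sub_le_four_mul_kobayashi hp hq
  rw [h, mul_zero, norm_le_zero_iff, sub_eq_zero] at this
  exact this.symm

end Kobayashi

lemma LinearPMap.apply_eq_zero_of_coe_eq_zero {R E F : Type*} [Ring R] [AddCommGroup E]
    [Module R E] [AddCommGroup F] [Module R F] (f : E →ₗ.[R] F) {x : f.domain}
    (hx : (x : E) = 0) : f x = 0 := by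
  rw [show x = 0 from Subtype.ext hx, f.map_zero]

lemma ClosedDenseOp.ext {H K : Type*} [NormedAddCommGroup H] [InnerProductSpace ℂ H]
    [NormedAddCommGroup K] [InnerProductSpace ℂ K] {T₁ T₂ : ClosedDenseOp H K}
    (h : T₁.op = T₂.op) : T₁ = T₂ := by
  cases T₁; cases T₂; cases h; rfl

open scoped InnerProductSpace InnerProduct

namespace ContinuousLinearMap

variable {𝕜 E F : Type*} [RCLike 𝕜]

lemma norm_lt_one_of_norm_apply_lt [NormedAddCommGroup E] [NormedSpace 𝕜 E]
    [FiniteDimensional 𝕜 E] [SeminormedAddCommGroup F] [NormedSpace 𝕜 F] (A : E →L[𝕜] F)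
    (h : ∀ y ≠ 0, ‖A y‖ < ‖y‖) : ‖A‖ < 1 := by
  have := FiniteDimensional.proper_rclike 𝕜 E
  obtain ⟨C, hC₀, hC₁, hC⟩ : ∃ C : ℝ, 0 ≤ C ∧ C < 1 ∧ ∀ y ∈ sphere (0 : E) 1, ‖A y‖ ≤ C := by
    rcases (sphere (0 : E) 1).eq_empty_or_nonempty with hempty | hne
    · exact ⟨0, le_rfl, one_pos, by simp [hempty]⟩
    · obtain ⟨y₀, hy₀, hmax⟩ :=
        (isCompact_sphere 0 1).exists_isMaxOn hne A.continuous.norm.continuousOn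
      have hy₀' : ‖y₀‖ = 1 := mem_sphere_zero_iff_norm.1 hy₀
      refine ⟨‖A y₀‖, norm_nonneg _, ?_, fun y hy => hmax hy⟩
      simpa [hy₀'] using h y₀ (ne_zero_of_norm_ne_zero (by simp [hy₀']))
  exact (A.opNorm_le_of_unit_norm hC₀ fun y hy => hC y (mem_sphere_zero_iff_norm.2 hy)).trans_lt hC₁

lemma norm_apply_lt_of_norm_adjoint_apply_lt [NormedAddCommGroup E] [InnerProductSpace 𝕜 E]
    [CompleteSpace E] [NormedAddCommGroup F] [InnerProductSpace 𝕜 F] [CompleteSpace F]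
    {A : E →L[𝕜] F} (h : ∀ v ≠ 0, ‖(A†) v‖ < ‖v‖) {y : E} (hy : y ≠ 0) : ‖A y‖ < ‖y‖ := by
  rcases eq_or_ne (A y) 0 with hAy | hAy
  · simpa [hAy] using hy
  have hsq : ‖A y‖ ^ 2 ≤ ‖(A†) (A y)‖ * ‖y‖ := by
    rw [@norm_sq_eq_re_inner 𝕜, ← adjoint_inner_left]
    exact (RCLike.re_le_norm _).trans (norm_inner_le_norm _ _)
  have hlt := hsq.trans_lt (mul_lt_mul_of_pos_right (h _ hAy) (norm_pos_iff.2 hy))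
  rw [sq] at hlt
  exact lt_of_mul_lt_mul_left hlt (norm_nonneg _)

end ContinuousLinearMap

section Hat

variable {H K : Type*} [NormedAddCommGroup H] [InnerProductSpace ℂ H] [CompleteSpace H]
  [NormedAddCommGroup K] [InnerProductSpace ℂ K]

/-- `S = (I + T*T)^{−1/2}` and `A = T̂ = S T*`. -/
structure IsHat (T : ClosedDenseOp H K) (S : H →L[ℂ] H) (A : K →L[ℂ] H) : Prop where
  isPositive : S.IsPositive
  right_inv : ∀ u : H, ∃ (hx : S (S u) ∈ T.op.domain)
      (hy : T.op ⟨S (S u), hx⟩ ∈ T.op.adjoint.domain),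
    S (S u) + T.op.adjoint ⟨T.op ⟨S (S u), hx⟩, hy⟩ = u
  left_inv : ∀ (x : H) (hx : x ∈ T.op.domain) (hy : T.op ⟨x, hx⟩ ∈ T.op.adjoint.domain),
    S (S (x + T.op.adjoint ⟨T.op ⟨x, hx⟩, hy⟩)) = x
  apply_eq : ∀ y : K, ∃ hy : y ∈ T.op.adjoint.domain, A y = S (T.op.adjoint ⟨y, hy⟩)

namespace IsHat

variable {T T₁ T₂ : ClosedDenseOp H K} {S S₁ S₂ : H →L[ℂ] H} {A : K →L[ℂ] H}

lemma domain_eq_range (h : IsHat T S A) : (T.op.domain : Set H) = range fun u => S (S u) := by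
  ext x
  refine ⟨fun hx => ?_, fun ⟨u, hu⟩ => hu ▸ (h.right_inv u).1⟩
  obtain ⟨hy, -⟩ := h.apply_eq (T.op ⟨x, hx⟩)
  exact ⟨_, h.left_inv x hx hy⟩

lemma apply_ne_zero (h : IsHat T S A) {v : H} (hv : v ≠ 0) : S v ≠ 0 := by
  intro hSv
  obtain ⟨hx, hy, hv'⟩ := h.right_inv v
  have hSSv : S (S v) = 0 := by rw [hSv, map_zero]
  rw [T.op.adjoint.apply_eq_zero_of_coe_eq_zero (x := ⟨_, hy⟩)
    (T.op.apply_eq_zero_of_coe_eq_zero hSSv), hSSv, zero_add] at hv'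
  exact hv hv'.symm

variable [CompleteSpace K]

lemma apply_sq (h : IsHat T S A) (u : H) (hu : S (S u) ∈ T.op.domain) :
    T.op ⟨S (S u), hu⟩ = (A†) (S u) := by
  refine ext_inner_left ℂ fun y => ?_
  obtain ⟨hy, hAy⟩ := h.apply_eq y
  rw [ContinuousLinearMap.adjoint_inner_right, hAy,
    ← T.op.adjoint_isFormalAdjoint T.dense ⟨y, hy⟩ ⟨_, hu⟩]
  exact (h.isPositive.isSymmetric _ _).symm

lemma apply_adjoint_apply_add (h : IsHat T S A) (u : H) :
    A ((A†) (S u)) + S (S (S u)) = S u := by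
  obtain ⟨hx, hy, hu⟩ := h.right_inv u
  obtain ⟨_, hA⟩ := h.apply_eq (T.op ⟨S (S u), hx⟩)
  rw [← h.apply_sq u hx, hA, ← map_add, add_comm]
  exact congrArg S hu

lemma comp_adjoint_add_mul_self (h : IsHat T S A) : A ∘L A† + S * S = 1 := by
  refine ContinuousLinearMap.ext_on (s := T.op.domain) (by simpa using T.dense) fun x hx => ?_
  obtain ⟨u, rfl⟩ : x ∈ range fun u => S (S u) := h.domain_eq_range ▸ hx
  simpa using h.apply_adjoint_apply_add (S u)

lemma norm_adjoint_apply_sq_add (h : IsHat T S A) (v : H) :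
    ‖(A†) v‖ ^ 2 + ‖S v‖ ^ 2 = ‖v‖ ^ 2 := by
  have hv : A ((A†) v) + S (S v) = v := by
    simpa using DFunLike.congr_fun h.comp_adjoint_add_mul_self v
  have hinner : ⟪v, A ((A†) v)⟫_ℂ + ⟪v, S (S v)⟫_ℂ = ⟪v, v⟫_ℂ := by rw [← inner_add_right, hv]
  have hS : ⟪v, S (S v)⟫_ℂ = ⟪S v, S v⟫_ℂ := (h.isPositive.isSymmetric v (S v)).symm
  rw [← ContinuousLinearMap.adjoint_inner_left, hS] at hinner
  simp only [@norm_sq_eq_re_inner ℂ, ← hinner, map_add]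

lemma norm_adjoint_apply_lt (h : IsHat T S A) {v : H} (hv : v ≠ 0) : ‖(A†) v‖ < ‖v‖ :=
  lt_of_pow_lt_pow_left₀ 2 (norm_nonneg v) (by
    nlinarith [h.norm_adjoint_apply_sq_add v, norm_pos_iff.2 (h.apply_ne_zero hv)])

lemma norm_lt_one [FiniteDimensional ℂ K] (h : IsHat T S A) : ‖A‖ < 1 :=
  A.norm_lt_one_of_norm_apply_lt fun _ hy =>
    A.norm_apply_lt_of_norm_adjoint_apply_lt (fun _ hv => h.norm_adjoint_apply_lt hv) hy

lemma unique (h₁ : IsHat T₁ S₁ A) (h₂ : IsHat T₂ S₂ A) : T₁ = T₂ := by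
  obtain rfl : S₁ = S₂ := (CFC.mul_self_eq_mul_self_iff S₁ S₂
    (S₁.nonneg_iff_isPositive.2 h₁.isPositive) (S₂.nonneg_iff_isPositive.2 h₂.isPositive)).1 <| by
      rw [eq_sub_of_add_eq' h₁.comp_adjoint_add_mul_self,
        eq_sub_of_add_eq' h₂.comp_adjoint_add_mul_self]
  refine ClosedDenseOp.ext <| LinearPMap.ext
    (SetLike.coe_injective (h₁.domain_eq_range.trans h₂.domain_eq_range.symm)) fun x hx₁ hx₂ => ?_
  obtain ⟨u, rfl⟩ : x ∈ range fun u => S₁ (S₁ u) := h₁.domain_eq_range ▸ hx₁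
  rw [h₁.apply_sq u, h₂.apply_sq u]

end IsHat

end Hat

/-- Let `dim K < ∞` and let `hat` assign to each `T ∈ C(H,K)` the operator
`T̂ = (I + T*T)^{−1/2} T*` (characterized by: there is a positive `S` with
`S² = (I + T*T)⁻¹` and `T̂ y = S (T* y)`).  Then `hat` is injective into the open unit ball of
`B(K,H)` and `d(T,S) := K_𝓑(T̂, Ŝ)` (the Kobayashi metric) is a metric on `C(H,K)`. -/
theorem hat_injective_and_kobayashi_metric
    {H K : Type*} [NormedAddCommGroup H] [InnerProductSpace ℂ H] [CompleteSpace H]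
    [NormedAddCommGroup K] [InnerProductSpace ℂ K] [FiniteDimensional ℂ K]
    (hat : ClosedDenseOp H K → (K →L[ℂ] H))
    (hhat : ∀ T : ClosedDenseOp H K, ∃ S : H →L[ℂ] H, S.IsPositive ∧
      (∀ u : H, ∃ (hx : S (S u) ∈ T.op.domain)
          (hy : T.op ⟨S (S u), hx⟩ ∈ T.op.adjoint.domain),
        S (S u) + T.op.adjoint ⟨T.op ⟨S (S u), hx⟩, hy⟩ = u) ∧
      (∀ (x : H) (hx : x ∈ T.op.domain) (hy : T.op ⟨x, hx⟩ ∈ T.op.adjoint.domain),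
        S (S (x + T.op.adjoint ⟨T.op ⟨x, hx⟩, hy⟩)) = x) ∧
      (∀ y : K, ∃ hy : y ∈ T.op.adjoint.domain, hat T y = S (T.op.adjoint ⟨y, hy⟩))) :
    Function.Injective hat ∧
    (∀ T : ClosedDenseOp H K, ‖hat T‖ < 1) ∧
    (∀ T S : ClosedDenseOp H K, 0 ≤ kobayashi (K →L[ℂ] H) (hat T) (hat S)) ∧
    (∀ T S : ClosedDenseOp H K,
      kobayashi (K →L[ℂ] H) (hat T) (hat S) = 0 ↔ T = S) ∧
    (∀ T S : ClosedDenseOp H K,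
      kobayashi (K →L[ℂ] H) (hat T) (hat S) = kobayashi (K →L[ℂ] H) (hat S) (hat T)) ∧
    (∀ T S R : ClosedDenseOp H K,
      kobayashi (K →L[ℂ] H) (hat T) (hat R) ≤
        kobayashi (K →L[ℂ] H) (hat T) (hat S) + kobayashi (K →L[ℂ] H) (hat S) (hat R)) := by
  have hT : ∀ T, ∃ S, IsHat T S (hat T) := fun T =>
    let ⟨S, hS, h₁, h₂, h₃⟩ := hhat T
    ⟨S, hS, h₁, h₂, h₃⟩
  have hnorm : ∀ T, ‖hat T‖ < 1 := fun T => (hT T).choose_spec.norm_lt_one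
  have hinj : Function.Injective hat := fun T₁ T₂ h => by
    obtain ⟨S₁, h₁⟩ := hT T₁
    obtain ⟨S₂, h₂⟩ := hT T₂
    exact h₁.unique (h ▸ h₂)
  exact ⟨hinj, hnorm, fun T S => kobayashi_nonneg _ _,
    fun T S => (kobayashi_eq_zero_iff (hnorm T) (hnorm S)).trans hinj.eq_iff,
    fun T S => kobayashi_comm _ _,
    fun T S R => kobayashi_triangle (hnorm T) (hnorm S) (hnorm R)⟩
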